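/- arXiv:1908.01657 — 2 statements merged into one kernel-verified Lean document; each statement's English description precedes it below -/
import Mathlib

section
/- The star K_{1,6} is equitably 3-choosable but not equitably 3-colorable. -/
open SimpleGraph

attribute [local instance] Classical.propDecidable

/-- `f` is an equitable `L`-coloring of `G` for the `k`-assignment `L`: a proper coloring
from the lists in which each color is used at most `⌈|V(G)|/k⌉` times. -/
def IsEquitableLColoring {V α : Type} [Fintype V] (G : SimpleGraph V) (k : ℕ)
    (L : V → Finset α) (f : V → α) : Prop :=
  (∀ v, f v ∈ L v) ∧ (∀ u v, G.Adj u v → f u ≠ f v) ∧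
    ∀ c : α, (Finset.univ.filter fun v => f v = c).card ≤ (Fintype.card V + k - 1) / k

/-- `G` is equitably `k`-choosable: equitably `L`-colorable for every `k`-assignment `L`. -/
def EquitablyChoosable {V : Type} [Fintype V] (G : SimpleGraph V) (k : ℕ) : Prop :=
  ∀ (α : Type) (L : V → Finset α), (∀ v, (L v).card = k) →
    ∃ f : V → α, IsEquitableLColoring G k L f

/-- `G` is equitably `k`-colorable: it has a proper `k`-coloring in which the sizes of any
two color classes differ by at most one. -/
def EquitablyColorable {V : Type} [Fintype V] (G : SimpleGraph V) (k : ℕ) : Prop :=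
  ∃ f : V → Fin k, (∀ u v, G.Adj u v → f u ≠ f v) ∧
    ∀ i j : Fin k, (Finset.univ.filter fun v => f v = i).card ≤
      (Finset.univ.filter fun v => f v = j).card + 1

/-! Color the center of the star from its list, and the leaves greedily from their lists with the
center's color removed: a leaf whose two remaining colors both already occur three times would
need six earlier leaves. Conversely, in a proper coloring the center is alone in its color class,
so in a 3-coloring the six leaves share two colors and one of them occurs at least three times,
two more than the center's color. -/

open Finset

theorem Finset.exists_choice_card_fiber_le_of_card_le_mul {ι α : Type*} [Nonempty α]
    (L : ι → Finset α) {s m : ℕ} (hL : ∀ i, s ≤ #(L i)) (t : Finset ι) (ht : #t ≤ s * m) :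
    ∃ f : ι → α, (∀ i ∈ t, f i ∈ L i) ∧ ∀ c, #{i ∈ t | f i = c} ≤ m := by
  induction t using Finset.induction_on with
  | empty => exact ⟨fun _ => Classical.ofNonempty, by simp, by simp⟩
  | insert a t ha ih =>
    rw [card_insert_of_notMem ha] at ht
    obtain ⟨f, hfL, hf⟩ := ih (by omega)
    obtain ⟨c, hcL, hc⟩ := exists_card_fiber_lt_of_card_lt_mul (s := t) (t := L a) (f := f)
      (n := m) (by nlinarith [hL a])
    have hupd : ∀ i ∈ t, Function.update f a c i = f i := fun i hi =>
      Function.update_of_ne (ne_of_mem_of_not_mem hi ha) _ _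
    refine ⟨Function.update f a c, ?_, fun d => ?_⟩
    · simp only [mem_insert, forall_eq_or_imp, Function.update_self]
      exact ⟨hcL, fun i hi => hupd i hi ▸ hfL i hi⟩
    · rw [filter_insert, Function.update_self, filter_congr fun i hi => by rw [hupd i hi]]
      split_ifs with hcd
      · subst hcd
        exact (card_insert_le _ _).trans hc
      · exact hf d

theorem equitablyChoosable_star {W : Type} [Fintype W] {k : ℕ} (hk : 0 < k)
    (hW : Fintype.card W ≤ (k - 1) * (Fintype.card W / k + 1)) :
    EquitablyChoosable (completeBipartiteGraph (Fin 1) W) k := by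
  intro α L hL
  have hcap : (Fintype.card (Fin 1 ⊕ W) + k - 1) / k = Fintype.card W / k + 1 := by
    rw [Fintype.card_sum, Fintype.card_fin, ← Nat.add_div_right _ hk]
    congr 1
    omega
  obtain ⟨c, hc⟩ : (L (.inl 0)).Nonempty := by rw [← card_pos, hL]; exact hk
  have : Nonempty α := ⟨c⟩
  obtain ⟨g, hgL, hg⟩ := exists_choice_card_fiber_le_of_card_le_mul
    (fun w => (L (.inr w)).erase c) (s := k - 1)
    (fun w => by rw [← hL (.inr w)]; exact pred_card_le_card_erase) univ (by rwa [card_univ])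
  have hgc : ∀ w, g w ≠ c := fun w => (mem_erase.mp (hgL w (mem_univ w))).1
  refine ⟨Sum.elim (fun _ => c) g, ?_, ?_, fun d => ?_⟩
  · rintro (j | w)
    · rwa [Fin.fin_one_eq_zero j]
    · exact mem_of_mem_erase (hgL w (mem_univ w))
  · rintro (j | w) (j' | w') hadj
    · simp at hadj
    · exact (hgc w').symm
    · exact hgc w
    · simp at hadj
  · have hsplit : #{v | Sum.elim (fun _ : Fin 1 => c) g v = d} =
        #{_j : Fin 1 | c = d} + #{w | g w = d} := by
      rw [← card_toLeft_add_card_toRight]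
      congr 2 <;> ext <;> by_cases c = d <;> simp [*, Fin.fin_one_eq_zero]
    rw [hsplit, hcap]
    by_cases hd : c = d
    · subst hd
      have hcenter : #{_j : Fin 1 | c = c} ≤ 1 := card_le_univ _
      have hleaves : #{w | g w = c} = 0 :=
        card_eq_zero.mpr (filter_false_of_mem fun w _ => hgc w)
      rw [hleaves]
      exact hcenter.trans (Nat.le_add_left _ _)
    · simpa [hd] using hg d

theorem EquitablyColorable.card_add_one_le_of_forall_adj {V : Type} [Fintype V]
    {G : SimpleGraph V} {k : ℕ} (hG : EquitablyColorable G k) {v : V}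
    (hv : ∀ w, w ≠ v → G.Adj v w) :
    Fintype.card V + 1 ≤ 2 * k := by
  obtain ⟨f, hprop, hbal⟩ := hG
  have hclass : #{w | f w = f v} = 1 :=
    card_eq_one.mpr ⟨v, eq_singleton_iff_unique_mem.mpr
      ⟨by simp, fun w hw => by_contra fun hwv => hprop v w (hv w hwv) (mem_filter.mp hw).2.symm⟩⟩
  have hrest : ∑ i ∈ univ.erase (f v), #{w | f w = i} ≤ #(univ.erase (f v)) * 2 :=
    sum_le_card_nsmul _ _ _ fun i _ => by simpa [hclass] using hbal i (f v)
  rw [card_erase_of_mem (mem_univ _), card_univ, Fintype.card_fin] at hrest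
  rw [← card_univ, card_eq_sum_card_fiberwise fun _ _ => mem_univ (f _),
    ← add_sum_erase _ _ (mem_univ (f v)), hclass]
  have hk := (f v).pos
  omega

theorem star_1_6_choosable_not_colorable :
    EquitablyChoosable (completeBipartiteGraph (Fin 1) (Fin 6)) 3 ∧
    ¬ EquitablyColorable (completeBipartiteGraph (Fin 1) (Fin 6)) 3 := by
  refine ⟨equitablyChoosable_star (by norm_num) (by simp), fun h => ?_⟩
  have hcenter : ∀ w, w ≠ .inl 0 → (completeBipartiteGraph (Fin 1) (Fin 6)).Adj (.inl 0) w := by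
    rintro (j | w) hw
    · exact absurd (congrArg Sum.inl (Fin.fin_one_eq_zero j)) hw
    · simp
  simpa using h.card_add_one_le_of_forall_adj hcenter
end

section
/- The square of the generalized theta graph Θ(2,4,4) is equitably 5-choosable. -/
open SimpleGraph

attribute [local instance] Classical.propDecidable

/-- The generalized theta graph `Θ(l₁, …, l_m)`: two vertices `Sum.inl false` (= u) and
`Sum.inl true` (= w) joined by `m` internally disjoint paths, the `i`-th of length `l i`
with internal vertices `Sum.inr ⟨i, j⟩` for `j : Fin (l i - 1)`. -/
def theta (m : ℕ) (l : Fin m → ℕ) : SimpleGraph (Bool ⊕ Σ i : Fin m, Fin (l i - 1)) :=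
  SimpleGraph.fromRel (fun x y => match x, y with
    | Sum.inl a, Sum.inl b => a ≠ b ∧ ∃ i, l i = 1
    | Sum.inl false, Sum.inr ⟨_, j⟩ => (j : ℕ) = 0
    | Sum.inl true, Sum.inr ⟨i, j⟩ => (j : ℕ) + 2 = l i
    | Sum.inr ⟨i, j⟩, Sum.inr ⟨i', j'⟩ => (i : ℕ) = (i' : ℕ) ∧ (j : ℕ) + 1 = (j' : ℕ)
    | _, _ => False)

/-- The `p`-th power of `G`: same vertices, edges between distinct vertices at distance
at most `p` in `G`. -/
def graphPow {V : Type} (G : SimpleGraph V) (p : ℕ) : SimpleGraph V :=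
  SimpleGraph.fromRel (fun u v => G.Reachable u v ∧ G.dist u v ≤ p)

/-!
Write the paths of `Θ(2,4,4)` as `u a w`, `u b₁ b₂ b₃ w` and `u c₁ c₂ c₃ w`. In its square the
only three pairwise non-adjacent vertices are `a`, `b₂`, `c₂`, and `⌈9/5⌉ = 2`, so a proper
`L`-coloring is equitable as soon as `a` and `b₂` get different colors, that is, as soon as it
is a proper coloring of the square with the edge `a b₂` added. That graph is 4-degenerate
(delete `c₂`, `c₁`, `c₃`, `u`; the five vertices left have at most four neighbours each), so it
can be colored greedily from any lists of five colors.
-/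

-- `decide` below needs the computable `Decidable` instances.
attribute [-instance] Classical.propDecidable

open Finset

theorem graphPow_two_adj {V : Type} (G : SimpleGraph V) {x y : V} :
    (graphPow G 2).Adj x y ↔ x ≠ y ∧ (G.Adj x y ∨ ∃ z, G.Adj x z ∧ G.Adj z y) := by
  have hwalk : G.Reachable x y ∧ G.dist x y ≤ 2 ↔ ∃ p : G.Walk x y, p.length ≤ 2 :=
    ⟨fun ⟨h, hd⟩ => let ⟨p, hp⟩ := h.exists_walk_length_eq_dist; ⟨p, hp ▸ hd⟩,
      fun ⟨p, hp⟩ => ⟨p.reachable, (dist_le p).trans hp⟩⟩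
  rw [graphPow, fromRel_adj, reachable_comm (u := y), dist_comm (u := y), or_self, hwalk]
  refine and_congr_right fun hne => ⟨?_, ?_⟩
  · rintro ⟨_ | ⟨h, _ | ⟨h', _ | _⟩⟩, hp⟩
    · exact absurd rfl hne
    · exact .inl h
    · exact .inr ⟨_, h, h'⟩
    · simp at hp
  · rintro (h | ⟨z, h, h'⟩)
    · exact ⟨h.toWalk, by simp⟩
    · exact ⟨.cons h h'.toWalk, by simp⟩

instance {V : Type} [Fintype V] [DecidableEq V] (G : SimpleGraph V) [DecidableRel G.Adj] :
    DecidableRel (graphPow G 2).Adj :=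
  fun _ _ => decidable_of_iff _ (graphPow_two_adj G).symm

instance (m : ℕ) (l : Fin m → ℕ) : DecidableRel (theta m l).Adj := by
  intro x y
  -- Once both endpoints are split into constructors, the `match` defining `theta` reduces.
  rcases x with (_ | _) | ⟨i, j⟩ <;> rcases y with (_ | _) | ⟨i', j'⟩ <;>
    exact inferInstanceAs (Decidable (_ ≠ _ ∧ (_ ∨ _)))

namespace SimpleGraph

variable {V α : Type*}

def IsDegenerateOrder (G : SimpleGraph V) [DecidableRel G.Adj] (k : ℕ) : List V → Prop
  | [] => True
  | v :: t => v ∉ t ∧ t.countP (G.Adj v ·) < k ∧ G.IsDegenerateOrder k t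

instance decidableIsDegenerateOrder [DecidableEq V] (G : SimpleGraph V) [DecidableRel G.Adj]
    (k : ℕ) : DecidablePred (G.IsDegenerateOrder k)
  | [] => inferInstanceAs (Decidable True)
  | v :: t =>
    have := decidableIsDegenerateOrder G k t
    inferInstanceAs (Decidable (v ∉ t ∧ _ ∧ _))

theorem IsDegenerateOrder.exists_listColoring [Nonempty α] {G : SimpleGraph V}
    [DecidableRel G.Adj] {k : ℕ} (L : V → Finset α) (hL : ∀ v, k ≤ #(L v)) :
    ∀ {l : List V}, G.IsDegenerateOrder k l →
      ∃ f : V → α, (∀ v ∈ l, f v ∈ L v) ∧ ∀ x ∈ l, ∀ y ∈ l, G.Adj x y → f x ≠ f y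
  | [], _ => ⟨fun _ => Classical.arbitrary α, by simp, by simp⟩
  | v :: t, ⟨hv, hdeg, ht⟩ => by
    classical
    obtain ⟨f, hfL, hf⟩ := exists_listColoring L hL ht
    set used := ((t.filter (G.Adj v ·)).map f).toFinset
    have hused : #used < #(L v) := calc
      #used ≤ ((t.filter (G.Adj v ·)).map f).length := List.toFinset_card_le _
      _ = t.countP (G.Adj v ·) := by simp [List.countP_eq_length_filter]
      _ < k := hdeg
      _ ≤ #(L v) := hL v
    obtain ⟨c, hcL, hcused⟩ := exists_mem_notMem_of_card_lt_card hused
    have hc : ∀ y ∈ t, G.Adj v y → c ≠ f y := by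
      rintro y hy hvy rfl
      exact hcused (by simpa [used] using ⟨y, ⟨hy, hvy⟩, rfl⟩)
    have hupdate : ∀ y ∈ t, Function.update f v c y = f y := fun y hy =>
      Function.update_of_ne (ne_of_mem_of_not_mem hy hv) _ _
    refine ⟨Function.update f v c, ?_, ?_⟩
    · rintro x (_ | ⟨_, hx⟩)
      · simpa using hcL
      · simpa [hupdate x hx] using hfL x hx
    · rintro x (_ | ⟨_, hx⟩) y (_ | ⟨_, hy⟩) hxy
      · exact absurd hxy G.irrefl
      · simpa [hupdate y hy] using hc y hy hxy
      · simpa [hupdate x hx] using (hc x hx hxy.symm).symm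
      · simpa [hupdate x hx, hupdate y hy] using hf x hx y hy hxy

theorem IndepSetFree.card_lt_of_forall_eq {G : SimpleGraph V} {n : ℕ} (hG : G.IndepSetFree n)
    {f : V → α} (hf : ∀ x y, G.Adj x y → f x ≠ f y) {s : Finset V} {c : α}
    (hs : ∀ v ∈ s, f v = c) : #s < n := by
  by_contra! h
  obtain ⟨t, hts, hcard⟩ := exists_subset_card_eq h
  exact hG t ⟨fun x hx y hy _ hxy => hf x y hxy ((hs x (hts hx)).trans (hs y (hts hy)).symm),
    hcard⟩

end SimpleGraph

namespace Theta244

abbrev Vertex : Type := Bool ⊕ Σ i : Fin 3, Fin (![2, 4, 4] i - 1)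

def u : Vertex := .inl false
def w : Vertex := .inl true
def a : Vertex := .inr ⟨0, ⟨0, by decide⟩⟩
def b₁ : Vertex := .inr ⟨1, ⟨0, by decide⟩⟩
def b₂ : Vertex := .inr ⟨1, ⟨1, by decide⟩⟩
def b₃ : Vertex := .inr ⟨1, ⟨2, by decide⟩⟩
def c₁ : Vertex := .inr ⟨2, ⟨0, by decide⟩⟩
def c₂ : Vertex := .inr ⟨2, ⟨1, by decide⟩⟩
def c₃ : Vertex := .inr ⟨2, ⟨2, by decide⟩⟩

def squareWithEdge : SimpleGraph Vertex := graphPow (theta 3 ![2, 4, 4]) 2 ⊔ edge a b₂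

-- Mathlib's instance for `edge` is built with `rw`, so `decide` cannot evaluate it.
instance : DecidableRel squareWithEdge.Adj := fun x y =>
  decidable_of_iff ((graphPow _ 2).Adj x y ∨ (x = a ∧ y = b₂ ∨ x = b₂ ∧ y = a) ∧ x ≠ y) <| by
    rw [squareWithEdge, sup_adj, edge_adj]

theorem indepSetFree_squareWithEdge : squareWithEdge.IndepSetFree 3 := by
  have hadj : ∀ x y z : Vertex, x ≠ y → x ≠ z → y ≠ z →
      squareWithEdge.Adj x y ∨ squareWithEdge.Adj x z ∨ squareWithEdge.Adj y z := by
    decide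
  rintro s ⟨hs, hcard⟩
  obtain ⟨x, y, z, hxy, hxz, hyz, rfl⟩ := card_eq_three.1 hcard
  rcases hadj x y z hxy hxz hyz with h | h | h
  · exact hs (by simp) (by simp) hxy h
  · exact hs (by simp) (by simp) hxz h
  · exact hs (by simp) (by simp) hyz h

def coloringOrder : List Vertex := [c₂, c₁, c₃, u, w, a, b₁, b₂, b₃]

-- Instance search finds no decidable list membership on `Vertex`; `Finset` membership uses
-- `DecidableEq Vertex`.
theorem mem_coloringOrder (v : Vertex) : v ∈ coloringOrder :=
  List.mem_toFinset.1 <| by revert v; decide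

theorem isDegenerateOrder_coloringOrder : IsDegenerateOrder squareWithEdge 5 coloringOrder := by
  decide

end Theta244

open Theta244

theorem theta_2_4_4_square_equitably_5_choosable :
    EquitablyChoosable (graphPow (theta 3 ![2, 4, 4]) 2) 5 := by
  intro α L hL
  have : Nonempty α := (card_pos.1 (by rw [hL u]; norm_num)).to_type
  obtain ⟨f, hfL, hf⟩ :=
    isDegenerateOrder_coloringOrder.exists_listColoring L fun v => (hL v).ge
  have hproper : ∀ x y, squareWithEdge.Adj x y → f x ≠ f y := fun x y =>
    hf x (mem_coloringOrder x) y (mem_coloringOrder y)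
  classical
  refine ⟨f, fun v => hfL v (mem_coloringOrder v), fun x y h => hproper x y (.inl h), fun c => ?_⟩
  exact Nat.le_of_lt_succ <|
    indepSetFree_squareWithEdge.card_lt_of_forall_eq hproper fun _ hv => (mem_filter.1 hv).2
end
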